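/- arXiv:1806.01238 — 4 statements merged into one kernel-verified Lean document; each statement's English description precedes it below -/
import Mathlib

section
/- Let x_1,...,x_n and y_1,...,y_n be points in R^d with the x_i pairwise distinct and the y_i pairwise distinct. Then T(x_i)=y_i is the unique cyclically monotone bijection from {x_1,...,x_n} to {y_1,...,y_n} if and only if there exist real numbers ψ_1,...,ψ_n such that ⟨x_i, y_i⟩ - ψ_i > max_{j≠i} (⟨x_i, y_j⟩ - ψ_j) for every i = 1,...,n. -/
open scoped RealInnerProductSpace BigOperators

/-!
Write `S σ = ∑ i, ⟪x i, y (σ i)⟫`. The map `x i ↦ y (σ i)` is cyclically monotone iff `σ`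
maximises `S`. Summing the cycle inequalities along the orbits of an arbitrary permutation gives
`S τ ≤ S σ` for every `τ`. Conversely, if `σ` is optimal, every permutation sum of the reduced costs
`⟪x i, y (σ i)⟫ - ⟪x i, y (σ j)⟫` is nonnegative; by Birkhoff–von Neumann so is every closed walk
(its edge-count matrix, padded on the diagonal, is a multiple of a doubly stochastic matrix), hence
shortest-path potentials exist, and they make the cycle sums telescope.

So the left-hand side says that the identity is the unique maximiser of `S`. Strict weights `ψ`
certify this after summing over `i`. Conversely, if every `σ ≠ 1` loses by a margin, penalising each
off-diagonal reduced cost by a small `ε` keeps all permutation sums nonnegative, and the potentials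
of the penalised costs are the required strict weights.
-/

namespace OptimalAssignment

open Finset Equiv Filter Topology

variable {ι : Type*}

lemma sum_range_shift_of_apply_eq {M : Type*} [AddCommGroup M] (g : ℕ → M) {m : ℕ}
    (h : g m = g 0) : ∑ k ∈ range m, g (k + 1) = ∑ k ∈ range m, g k := by
  have h' := (sum_range_succ' g m).symm.trans (sum_range_succ g m)
  rwa [h, add_left_inj] at h'

lemma sum_cycle_sub_eq_zero {M : Type*} [AddCommGroup M] {m : ℕ} (g : ι → M)
    (p : Fin (m + 1) → ι) : ∑ k, (g (p (k + 1)) - g (p k)) = 0 := by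
  rw [sum_sub_distrib, sub_eq_zero]
  exact Equiv.sum_comp (Equiv.addRight 1) (g ∘ p)

lemma sum_cycle_nonpos_of_le_sub (F : ι → ι → ℝ) (g : ι → ℝ) (hF : ∀ i j, F i j ≤ g j - g i)
    {m : ℕ} (p : Fin (m + 1) → ι) : ∑ k, F (p k) (p (k + 1)) ≤ 0 :=
  (sum_le_sum fun _ _ => hF _ _).trans (sum_cycle_sub_eq_zero g p).le

lemma sum_apply_perm_nonpos_of_sum_cycle_nonpos [Fintype ι] (F : ι → ι → ℝ)
    (hF : ∀ (m : ℕ) (p : Fin (m + 1) → ι), ∑ k, F (p k) (p (k + 1)) ≤ 0) (π : Perm ι) :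
    ∑ i, F i (π i) ≤ 0 := by
  obtain ⟨m, hm⟩ := Nat.exists_eq_add_one_of_ne_zero (orderOf_pos π).ne'
  have orbit (j : ι) : ∑ k : Fin (m + 1), F ((π ^ (k : ℕ)) j) (π ((π ^ (k : ℕ)) j)) ≤ 0 := by
    have step (k : Fin (m + 1)) : (π ^ ((k + 1 : Fin (m + 1)) : ℕ)) j = π ((π ^ (k : ℕ)) j) := by
      rw [show ((k + 1 : Fin (m + 1)) : ℕ) = (k + 1) % orderOf π by
        rw [hm, Fin.val_add, Fin.val_one', Nat.add_mod_mod], pow_mod_orderOf, pow_succ',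
        Perm.mul_apply]
    simpa only [step] using hF m fun k => (π ^ (k : ℕ)) j
  have hsum : ∑ j, ∑ k : Fin (m + 1), F ((π ^ (k : ℕ)) j) (π ((π ^ (k : ℕ)) j))
      = (m + 1) * ∑ i, F i (π i) := by
    rw [sum_comm]
    simp only [Equiv.sum_comp (π ^ _) fun i => F i (π i), sum_const, card_univ, Fintype.card_fin,
      nsmul_eq_mul, Nat.cast_add, Nat.cast_one]
  have := hsum ▸ sum_nonpos fun j _ => orbit j
  exact nonpos_of_mul_nonpos_right this (by positivity)

lemma exists_potential_of_sum_closed_walk_nonneg {c : ι → ι → ℝ}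
    (hwalk : ∀ (f : ℕ → ι) (m : ℕ), f m = f 0 → 0 ≤ ∑ k ∈ range m, c (f k) (f (k + 1))) :
    ∃ u : ι → ℝ, ∀ i j, u i ≤ u j + c i j := by
  rcases isEmpty_or_nonempty ι with hι | ⟨⟨r⟩⟩
  · exact ⟨0, fun i => isEmptyElim i⟩
  let walkLengths (i : ι) : Set ℝ :=
    {s | ∃ (m : ℕ) (f : ℕ → ι), f 0 = i ∧ f m = r ∧ s = ∑ k ∈ range m, c (f k) (f (k + 1))}
  have cons (i j : ι) {s : ℝ} (hs : s ∈ walkLengths j) : c i j + s ∈ walkLengths i := by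
    obtain ⟨m, f, rfl, hfm, rfl⟩ := hs
    refine ⟨m + 1, fun k => if k = 0 then i else f (k - 1), rfl, by simpa using hfm, ?_⟩
    simp [sum_range_succ' _ m, add_comm]
  have nonempty (i : ι) : (walkLengths i).Nonempty :=
    ⟨c i r + 0, cons i r ⟨0, fun _ => r, rfl, rfl, by simp⟩⟩
  have bddBelow (i : ι) : BddBelow (walkLengths i) := by
    refine ⟨-c r i, fun s hs => ?_⟩
    obtain ⟨m, f, h0, hm, hsum⟩ := cons r i hs
    linarith [hsum ▸ hwalk f m (hm.trans h0.symm)]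
  refine ⟨fun i => sInf (walkLengths i), fun i j => ?_⟩
  have : sInf (walkLengths i) - c i j ≤ sInf (walkLengths j) :=
    le_csInf (nonempty j) fun s hs => by linarith [csInf_le (bddBelow i) (cons i j hs)]
  linarith

section Potential

variable [Fintype ι] [DecidableEq ι] {c : ι → ι → ℝ}

lemma sum_permMatrix_mul (σ : Perm ι) :
    ∑ i, ∑ j, σ.permMatrix ℝ i j * c i j = ∑ i, c i (σ i) := by
  simp [Perm.permMatrix, PEquiv.toMatrix_apply, Equiv.toPEquiv_apply]

lemma sum_mul_nonneg_of_sum_row_eq_sum_col (hc : ∀ i, c i i = 0)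
    (hperm : ∀ σ : Perm ι, 0 ≤ ∑ i, c i (σ i)) {N : Matrix ι ι ℝ} (hN : ∀ i j, 0 ≤ N i j)
    (hrow_col : ∀ i, ∑ j, N i j = ∑ j, N j i) : 0 ≤ ∑ i, ∑ j, N i j * c i j := by
  set s := ∑ i, ∑ j, N i j
  have hs : 0 ≤ s := sum_nonneg fun i _ => sum_nonneg fun j _ => hN i j
  have hrow_le (i : ι) : ∑ j, N i j ≤ s :=
    single_le_sum (f := fun i => ∑ j, N i j) (fun i _ => sum_nonneg fun j _ => hN i j) (mem_univ i)
  -- padding the diagonal makes all line sums equal to `s` without changing the pairing with `c`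
  set M := N + Matrix.diagonal fun i => s - ∑ j, N i j
  have hMc : ∑ i, ∑ j, M i j * c i j = ∑ i, ∑ j, N i j * c i j := by
    simp [M, Matrix.diagonal_apply, add_mul, sum_add_distrib, hc]
  have hM : (∀ i j, 0 ≤ M i j) ∧ (∀ i, ∑ j, M i j = s) ∧ (∀ j, ∑ i, M i j = s) := by
    refine ⟨fun i j => ?_, fun i => ?_, fun j => ?_⟩
    · rcases eq_or_ne i j with rfl | hij
      · simpa [M] using add_nonneg (hN i i) (sub_nonneg.2 (hrow_le i))
      · simpa [M, hij] using hN i j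
    · simp [M, Matrix.diagonal_apply, sum_add_distrib]
    · simp [M, Matrix.diagonal_apply, sum_add_distrib, ← hrow_col]
  obtain ⟨M', hM', hMM'⟩ := (exists_mem_doublyStochastic_eq_smul_iff hs).2 hM
  obtain ⟨w, hw0, -, hw⟩ := exists_eq_sum_perm_of_mem_doublyStochastic hM'
  have hpairing : ∑ i, ∑ j, M i j * c i j = s * ∑ σ, w σ * ∑ i, c i (σ i) := by
    simp only [hMM', ← hw, ← sum_permMatrix_mul, Matrix.smul_apply, Matrix.sum_apply, smul_eq_mul,
      mul_sum, sum_mul]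
    rw [sum_comm_cycle]
    exact sum_congr rfl fun σ _ => sum_congr rfl fun i _ => sum_congr rfl fun j _ => by ring
  rw [← hMc, hpairing]
  exact mul_nonneg hs (sum_nonneg fun σ _ => mul_nonneg (hw0 σ) (hperm σ))

lemma sum_closed_walk_nonneg_of_sum_perm_nonneg (hc : ∀ i, c i i = 0)
    (hperm : ∀ σ : Perm ι, 0 ≤ ∑ i, c i (σ i)) (f : ℕ → ι) {m : ℕ} (hf : f m = f 0) :
    0 ≤ ∑ k ∈ range m, c (f k) (f (k + 1)) := by
  set N : Matrix ι ι ℝ := fun i j => ∑ k ∈ range m, if f k = i ∧ f (k + 1) = j then 1 else 0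
  have hrow (i : ι) : ∑ j, N i j = ∑ k ∈ range m, if f k = i then 1 else 0 := by
    rw [sum_comm]
    simp [ite_and]
  have hcol (j : ι) : ∑ i, N i j = ∑ k ∈ range m, if f (k + 1) = j then 1 else 0 := by
    rw [sum_comm]
    simp [ite_and]
  have hpairing : ∑ i, ∑ j, N i j * c i j = ∑ k ∈ range m, c (f k) (f (k + 1)) := by
    simp only [N, sum_mul, ite_mul, one_mul, zero_mul]
    rw [sum_comm_cycle]
    simp [ite_and]
  rw [← hpairing]
  refine sum_mul_nonneg_of_sum_row_eq_sum_col hc hperm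
    (fun i j => sum_nonneg fun k _ => by positivity) fun i => ?_
  rw [hrow, hcol,
    sum_range_shift_of_apply_eq (fun k => if f k = i then (1 : ℝ) else 0) (by simp [hf])]

lemma exists_potential_of_sum_perm_nonneg (hc : ∀ i, c i i = 0)
    (hperm : ∀ σ : Perm ι, 0 ≤ ∑ i, c i (σ i)) : ∃ u : ι → ℝ, ∀ i j, u i ≤ u j + c i j :=
  exists_potential_of_sum_closed_walk_nonneg fun f _ hf =>
    sum_closed_walk_nonneg_of_sum_perm_nonneg hc hperm f hf

end Potential

lemma exists_pos_mul_le_of_finite {α : Type*} [Finite α] {f : α → ℝ} (hf : ∀ a, 0 < f a)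
    (K : ℝ) : ∃ ε > 0, ∀ a, ε * K ≤ f a := by
  have hK : Tendsto (· * K) (𝓝 0) (𝓝 0) := by simpa using (continuous_mul_const K).tendsto 0
  have : ∀ᶠ ε in 𝓝[>] (0 : ℝ), ∀ a, ε * K ≤ f a := eventually_all.2 fun a =>
    (hK.eventually (eventually_le_nhds (hf a))).filter_mono nhdsWithin_le_nhds
  exact (this.and self_mem_nhdsWithin).exists.imp fun ε h => ⟨h.2, h.1⟩

lemma forall_le_and_unique_iff_forall_ne_lt {α β : Type*} [LinearOrder β] (f : α → β) (a : α) :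
    ((∀ b, f b ≤ f a) ∧ ∀ b, (∀ b', f b' ≤ f b) → b = a) ↔ ∀ b, b ≠ a → f b < f a := by
  refine ⟨fun ⟨hle, huniq⟩ b hb => (hle b).lt_of_ne fun hba => hb (huniq b fun b' => ?_),
    fun h => ⟨fun b => ?_, fun b hb => ?_⟩⟩
  · exact hba ▸ hle b'
  · rcases eq_or_ne b a with rfl | hba
    exacts [le_rfl, (h b hba).le]
  · by_contra hba
    exact (hb a).not_gt (h b hba)

/-- `c`-cyclical monotonicity of the assignment `σ`; for `c i j = ⟪x i, y j⟫` it is cyclical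
monotonicity of the graph of `x i ↦ y (σ i)`. -/
def IsCyclicallyMonotone (c : ι → ι → ℝ) (σ : Perm ι) : Prop :=
  ∀ (m : ℕ) (p : Fin (m + 1) → ι), ∑ k, (c (p (k + 1)) (σ (p k)) - c (p k) (σ (p k))) ≤ 0

lemma isCyclicallyMonotone_inner_iff {E : Type*} [NormedAddCommGroup E] [InnerProductSpace ℝ E]
    (x y : ι → E) (σ : Perm ι) :
    IsCyclicallyMonotone (fun i j => ⟪x i, y j⟫) σ ↔
      ∀ (m : ℕ) (p : Fin (m + 1) → ι), ∑ k, ⟪y (σ (p k)), x (p (k + 1)) - x (p k)⟫ ≤ 0 := by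
  simp only [IsCyclicallyMonotone, inner_sub_right, real_inner_comm]

variable [Fintype ι] [DecidableEq ι] {c : ι → ι → ℝ}

lemma isCyclicallyMonotone_iff_sum_le {σ : Perm ι} :
    IsCyclicallyMonotone c σ ↔ ∀ τ : Perm ι, ∑ i, c i (τ i) ≤ ∑ i, c i (σ i) := by
  constructor
  · intro h τ
    have := sum_apply_perm_nonpos_of_sum_cycle_nonpos (fun i j => c j (σ i) - c i (σ i)) h (τ⁻¹ * σ)
    rw [sum_sub_distrib, sub_nonpos] at this
    calc ∑ i, c i (τ i) = ∑ i, c (τ⁻¹ (σ i)) (σ i) := by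
          rw [Equiv.sum_comp σ fun k => c (τ⁻¹ k) k, ← Equiv.sum_comp τ fun k => c (τ⁻¹ k) k]
          simp
      _ ≤ ∑ i, c i (σ i) := this
  · intro h
    obtain ⟨u, hu⟩ := exists_potential_of_sum_perm_nonneg (c := fun i j => c i (σ i) - c i (σ j))
      (by simp) fun π => by simpa [sum_sub_distrib] using h (σ * π)
    exact fun m p => sum_cycle_nonpos_of_le_sub (fun i j => c j (σ i) - c i (σ i))
      (fun t => c t (σ t) - u t) (fun i j => by linarith [hu j i]) p

lemma exists_strict_potential_iff_sum_lt :
    (∃ ψ : ι → ℝ, ∀ i j, j ≠ i → c i j - ψ j < c i i - ψ i) ↔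
      ∀ σ : Perm ι, σ ≠ 1 → ∑ i, c i (σ i) < ∑ i, c i i := by
  constructor
  · rintro ⟨ψ, hψ⟩ σ hσ
    obtain ⟨i₀, hi₀⟩ : ∃ i, σ i ≠ i := by
      contrapose! hσ
      exact Equiv.ext hσ
    have hle (i j : ι) : c i j - ψ j ≤ c i i - ψ i := by
      rcases eq_or_ne j i with rfl | hji
      exacts [le_rfl, (hψ i j hji).le]
    have := sum_lt_sum (fun i _ => hle i (σ i)) ⟨i₀, mem_univ _, hψ i₀ (σ i₀) hi₀⟩
    rw [sum_sub_distrib, sum_sub_distrib, Equiv.sum_comp σ ψ] at this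
    linarith
  · intro h
    obtain ⟨ε, hε, hεσ⟩ := exists_pos_mul_le_of_finite
      (f := fun σ : {σ : Perm ι // σ ≠ 1} => ∑ i, c i i - ∑ i, c i (σ.1 i))
      (fun σ => sub_pos.2 (h σ.1 σ.2)) (Fintype.card ι)
    let a (i j : ι) : ℝ := c i i - c i j - if i = j then 0 else ε
    have ha (σ : Perm ι) : 0 ≤ ∑ i, a i (σ i) := by
      simp only [a, sum_sub_distrib]
      by_cases hσ : σ = 1
      · simp [hσ]
      have : ∑ i, (if i = σ i then 0 else ε) ≤ Fintype.card ι * ε := by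
        simpa using sum_le_card_nsmul univ (fun i => if i = σ i then 0 else ε) ε
          fun i _ => by split_ifs <;> linarith
      linarith [hεσ ⟨σ, hσ⟩]
    obtain ⟨u, hu⟩ := exists_potential_of_sum_perm_nonneg (c := a) (by simp [a]) ha
    refine ⟨u, fun i j hji => ?_⟩
    have := hu i j
    simp only [a, hji.symm, if_false] at this
    linarith

end OptimalAssignment

theorem unique_cyclically_monotone_iff_exists_strict_weights_general
    {d n : ℕ} (x y : Fin n → EuclideanSpace ℝ (Fin d)) :
    ((∀ (m : ℕ) (i : Fin (m + 1) → Fin n),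
        ∑ k : Fin (m + 1), ⟪y (i k), x (i (k + 1)) - x (i k)⟫ ≤ 0) ∧
      ∀ σ : Equiv.Perm (Fin n),
        (∀ (m : ℕ) (i : Fin (m + 1) → Fin n),
          ∑ k : Fin (m + 1), ⟪y (σ (i k)), x (i (k + 1)) - x (i k)⟫ ≤ 0) → σ = 1)
      ↔ ∃ ψ : Fin n → ℝ, ∀ i j : Fin n, j ≠ i →
          ⟪x i, y j⟫ - ψ j < ⟪x i, y i⟫ - ψ i := by
  let S (σ : Equiv.Perm (Fin n)) : ℝ := ∑ i, ⟪x i, y (σ i)⟫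
  have hcm (σ : Equiv.Perm (Fin n)) :=
    (OptimalAssignment.isCyclicallyMonotone_inner_iff x y σ).symm.trans
      OptimalAssignment.isCyclicallyMonotone_iff_sum_le
  calc _ ↔ (∀ τ, S τ ≤ S 1) ∧ ∀ σ, (∀ τ, S τ ≤ S σ) → σ = 1 :=
        and_congr (hcm 1) (forall_congr' fun σ => imp_congr_left (hcm σ))
    _ ↔ ∀ σ, σ ≠ 1 → S σ < S 1 := OptimalAssignment.forall_le_and_unique_iff_forall_ne_lt S 1
    _ ↔ _ :=
        (OptimalAssignment.exists_strict_potential_iff_sum_lt (c := fun i j => ⟪x i, y j⟫)).symm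

/-- `x i ↦ y i` is the unique cyclically monotone bijection from
`{x 1, ..., x n}` to `{y 1, ..., y n}` iff there exist weights `ψ i` such that
`⟪x i, y i⟫ - ψ i > max_{j ≠ i} (⟪x i, y j⟫ - ψ j)` for every `i`. -/
theorem unique_cyclically_monotone_iff_exists_strict_weights
    {d n : ℕ} (x y : Fin n → EuclideanSpace ℝ (Fin d))
    (hx : Function.Injective x) (hy : Function.Injective y) :
    ((∀ (m : ℕ) (i : Fin (m + 1) → Fin n),
        ∑ k : Fin (m + 1), ⟪y (i k), x (i (k + 1)) - x (i k)⟫ ≤ 0) ∧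
      ∀ σ : Equiv.Perm (Fin n),
        (∀ (m : ℕ) (i : Fin (m + 1) → Fin n),
          ∑ k : Fin (m + 1), ⟪y (σ (i k)), x (i (k + 1)) - x (i k)⟫ ≤ 0) → σ = 1)
      ↔ ∃ ψ : Fin n → ℝ, ∀ i j : Fin n, j ≠ i →
          ⟪x i, y j⟫ - ψ j < ⟪x i, y i⟫ - ψ i :=
  unique_cyclically_monotone_iff_exists_strict_weights_general x y
end

section
/- Let φ(x) = max_{1≤j≤n}(⟨x, y_j⟩ - ψ_j) with distinct y_j, suppose ⟨x_i, y_i⟩ - ψ_i > max_{j≠i}(⟨x_i, y_j⟩ - ψ_j) for distinct points x_1,...,x_n, and let ε̃_0 := min_i [(⟨x_i, y_i⟩ - ψ_i) - max_{j≠i}(⟨x_i, y_j⟩ - ψ_j)] and ε_0 := (ε̃_0/2)·min(1, 1/max_i ‖y_i‖). Then for every 0 < ε ≤ (ε_0/2)·min(1, 1/max_i ‖y_i‖) and every x in the ball B(x_i, ε), the Moreau envelope φ_ε(x) := inf_y [φ(y) + ‖y-x‖²/(2ε)] equals ⟨x, y_i⟩ - ψ_i - (ε/2)‖y_i‖²,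 and consequently ∇φ_ε(x_i) = y_i. -/
open scoped RealInnerProductSpace BigOperators

/-!
Each affine piece `ℓ j = ⟪·, y j⟫ - ψ j` is a minorant of `φ`, and completing the square shows
that the Moreau envelope of `ℓ i` is `ℓ i - ε/2 ‖y i‖²`, attained at the proximal point
`z - ε • y i`. For `z` within `ε` of `x i` this point stays within `ε (1 + M)` of `x i`, and on
that ball the margin `ε̃₀` by which `ℓ i` beats the other pieces at `x i` still dominates the
drift `⟪w - x i, y j - y i⟫ ≤ ε (1 + M) · 2M`, so `φ = ℓ i` at the proximal point and the
envelopes of `φ` and `ℓ i` coincide. The gradient follows since the envelope is affine near `x i`.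
-/

section

variable {E : Type*} [NormedAddCommGroup E] [InnerProductSpace ℝ E]

noncomputable def moreauEnvelope (f : E → ℝ) (ε : ℝ) (z : E) : ℝ :=
  ⨅ w, f w + ‖w - z‖ ^ 2 / (2 * ε)

lemma inner_sub_le_inner_add_sq_div {ε : ℝ} (hε : 0 < ε) (y z w : E) :
    ⟪z, y⟫ - ε / 2 * ‖y‖ ^ 2 ≤ ⟪w, y⟫ + ‖w - z‖ ^ 2 / (2 * ε) := by
  have hsq : 0 ≤ ‖(w - z) + ε • y‖ ^ 2 / (2 * ε) := by positivity
  rw [norm_add_sq_real, real_inner_smul_right, norm_smul, Real.norm_eq_abs, abs_of_pos hε,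
    inner_sub_left] at hsq
  field_simp at hsq ⊢
  nlinarith [hsq]

lemma inner_sub_smul_add_sq_div {ε : ℝ} (hε : 0 < ε) (y z : E) :
    ⟪z - ε • y, y⟫ + ‖z - ε • y - z‖ ^ 2 / (2 * ε) = ⟪z, y⟫ - ε / 2 * ‖y‖ ^ 2 := by
  rw [sub_sub_cancel_left, norm_neg, norm_smul, Real.norm_eq_abs, abs_of_pos hε, inner_sub_left,
    real_inner_smul_left, real_inner_self_eq_norm_sq]
  field_simp
  ring

lemma moreauEnvelope_eq_of_le_of_eq {f : E → ℝ} {ε c : ℝ} (hε : 0 < ε) {y z : E}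
    (hf : ∀ w, ⟪w, y⟫ - c ≤ f w) (hz : f (z - ε • y) = ⟪z - ε • y, y⟫ - c) :
    moreauEnvelope f ε z = ⟪z, y⟫ - c - ε / 2 * ‖y‖ ^ 2 := by
  have hlow : ∀ w, ⟪z, y⟫ - c - ε / 2 * ‖y‖ ^ 2 ≤ f w + ‖w - z‖ ^ 2 / (2 * ε) := fun w => by
    linarith [hf w, inner_sub_le_inner_add_sq_div hε y z w]
  refine le_antisymm ?_ (le_ciInf hlow)
  calc moreauEnvelope f ε z ≤ f (z - ε • y) + ‖z - ε • y - z‖ ^ 2 / (2 * ε) :=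
        ciInf_le ⟨_, Set.forall_mem_range.2 hlow⟩ _
    _ = _ := by rw [hz]; linarith [inner_sub_smul_add_sq_div hε y z]

lemma inner_sub_le_of_near {a b x w : E} {s t g : ℝ} (hx : ⟪x, a⟫ - s + g ≤ ⟪x, b⟫ - t)
    (hw : ‖w - x‖ * ‖a - b‖ ≤ g) : ⟪w, a⟫ - s ≤ ⟪w, b⟫ - t := by
  have h : ⟪w, a⟫ - ⟪w, b⟫ = ⟪x, a⟫ - ⟪x, b⟫ + ⟪w - x, a - b⟫ := by
    simp only [inner_sub_left, inner_sub_right]; ring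
  linarith [real_inner_le_norm (w - x) (a - b)]

lemma iSup_inner_sub_eq_of_near {ι : Type*} [Finite ι] {y : ι → E} {ψ : ι → ℝ} {i : ι} {x w : E}
    {g : ℝ} (hx : ∀ j ≠ i, ⟪x, y j⟫ - ψ j + g ≤ ⟪x, y i⟫ - ψ i)
    (hw : ∀ j ≠ i, ‖w - x‖ * ‖y j - y i‖ ≤ g) :
    ⨆ j, (⟪w, y j⟫ - ψ j) = ⟪w, y i⟫ - ψ i := by
  have : Nonempty ι := ⟨i⟩
  refine le_antisymm (ciSup_le fun j => ?_)
    (le_ciSup (Finite.bddAbove_range fun j => ⟪w, y j⟫ - ψ j) i)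
  rcases eq_or_ne j i with rfl | hj
  · exact le_rfl
  · exact inner_sub_le_of_near (hx j hj) (hw j hj)

lemma hasGradientAt_inner_sub_const [CompleteSpace E] (y : E) (c : ℝ) (x : E) :
    HasGradientAt (fun z => ⟪z, y⟫ - c) y x := by
  rw [hasGradientAt_iff_hasFDerivAt]
  have h : (fun z => ⟪z, y⟫ - c) = fun z => InnerProductSpace.toDual ℝ E y z - c := by
    simp only [InnerProductSpace.toDual_apply_apply, real_inner_comm]
  exact h ▸ (InnerProductSpace.toDual ℝ E y).hasFDerivAt.sub_const c

lemma iInf_sub_iSup_ne_le {ι : Type*} [Finite ι] (a : ι → ℝ) (b : ι → ι → ℝ) {i j : ι}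
    (hji : j ≠ i) : ⨅ i, (a i - ⨆ j : {j // j ≠ i}, b i j) ≤ a i - b i j := by
  have := le_ciSup (Finite.bddAbove_range fun j : {j // j ≠ i} => b i j) ⟨j, hji⟩
  linarith [ciInf_le (Finite.bddBelow_range fun i => a i - ⨆ j : {j // j ≠ i}, b i j) i]

lemma mul_le_of_le_mul_min_one_div_sq {ε g M : ℝ} (hM : 0 ≤ M) (hε : 0 < ε)
    (h : ε ≤ g * min 1 (1 / M) ^ 2 / 4) : ε * ((1 + M) * (2 * M)) ≤ g := by
  set m := min 1 (1 / M)
  have hm1 : m ≤ 1 := min_le_left _ _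
  have hm0 : 0 ≤ m := le_min zero_le_one (by positivity)
  have hmM : m * M ≤ 1 := by
    rcases hM.eq_or_lt with rfl | hM
    · simp
    · calc m * M ≤ 1 / M * M := by gcongr; exact min_le_right _ _
        _ = 1 := by field_simp
  have hg : 0 < g := by nlinarith [sq_nonneg m]
  have hK : m ^ 2 * ((1 + M) * (2 * M)) ≤ 4 := by nlinarith [mul_nonneg hm0 hM]
  calc ε * ((1 + M) * (2 * M)) ≤ g * m ^ 2 / 4 * ((1 + M) * (2 * M)) := by gcongr
    _ = g * (m ^ 2 * ((1 + M) * (2 * M))) / 4 := by ring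
    _ ≤ g := by nlinarith

end

theorem moreau_envelope_interpolates_general
    {d n : ℕ} (x y : Fin n → EuclideanSpace ℝ (Fin d))
    (ψ : Fin n → ℝ)
    (φ : EuclideanSpace ℝ (Fin d) → ℝ)
    (hφ : φ = fun z => ⨆ j : Fin n, (⟪z, y j⟫ - ψ j))
    (εt0 ε0 M : ℝ)
    (hM : M = ⨆ i : Fin n, ‖y i‖)
    (hεt0 : εt0 = ⨅ i : Fin n,
      ((⟪x i, y i⟫ - ψ i) - ⨆ j : {j : Fin n // j ≠ i}, (⟪x i, y (j : Fin n)⟫ - ψ (j : Fin n))))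
    (hε0 : ε0 = εt0 / 2 * min 1 (1 / M))
    (φε : ℝ → EuclideanSpace ℝ (Fin d) → ℝ)
    (hφε : φε = fun ε z => ⨅ w : EuclideanSpace ℝ (Fin d), (φ w + ‖w - z‖ ^ 2 / (2 * ε))) :
    ∀ ε : ℝ, 0 < ε → ε ≤ ε0 / 2 * min 1 (1 / M) →
      ∀ i : Fin n,
        (∀ z ∈ Metric.ball (x i) ε, φε ε z = ⟪z, y i⟫ - ψ i - ε / 2 * ‖y i‖ ^ 2) ∧
        HasGradientAt (φε ε) (y i) (x i) := by
  obtain rfl : φε = moreauEnvelope φ := hφε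
  intro ε hε hεle i
  have hyM : ∀ j, ‖y j‖ ≤ M := hM ▸ le_ciSup (Finite.bddAbove_range fun j => ‖y j‖)
  have hgap : ∀ j ≠ i, ⟪x i, y j⟫ - ψ j + εt0 ≤ ⟪x i, y i⟫ - ψ i := fun j hj => by
    linarith [hεt0 ▸ iInf_sub_iSup_ne_le (fun i => ⟪x i, y i⟫ - ψ i)
      (fun i j => ⟪x i, y j⟫ - ψ j) hj]
  have hradius : ε * ((1 + M) * (2 * M)) ≤ εt0 :=
    mul_le_of_le_mul_min_one_div_sq ((norm_nonneg _).trans (hyM i)) hε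
      (hεle.trans_eq (by rw [hε0]; ring))
  have hball : ∀ z ∈ Metric.ball (x i) ε,
      moreauEnvelope φ ε z = ⟪z, y i⟫ - ψ i - ε / 2 * ‖y i‖ ^ 2 := by
    intro z hz
    subst hφ
    refine moreauEnvelope_eq_of_le_of_eq hε
      (fun w => le_ciSup (Finite.bddAbove_range fun j => ⟪w, y j⟫ - ψ j) i)
      (iSup_inner_sub_eq_of_near hgap fun j _ => ?_)
    have hprox : ‖z - ε • y i - x i‖ ≤ ε * (1 + M) := by
      rw [sub_right_comm]
      refine (norm_sub_le _ _).trans ?_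
      rw [norm_smul, Real.norm_of_nonneg hε.le]
      nlinarith [mem_ball_iff_norm.1 hz, hyM i]
    have hdiff : ‖y j - y i‖ ≤ 2 * M := (norm_sub_le _ _).trans (by linarith [hyM i, hyM j])
    calc ‖z - ε • y i - x i‖ * ‖y j - y i‖ ≤ ε * (1 + M) * (2 * M) :=
          mul_le_mul hprox hdiff (norm_nonneg _) ((norm_nonneg _).trans hprox)
      _ ≤ εt0 := by linarith
  refine ⟨hball, HasGradientAt.congr_of_eventuallyEq
    (hasGradientAt_inner_sub_const (y i) (ψ i + ε / 2 * ‖y i‖ ^ 2) (x i)) ?_⟩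
  filter_upwards [Metric.ball_mem_nhds (x i) hε] with z hz
  rw [hball z hz, sub_sub]

/-- with the optimal smoothing constants `ε̃₀` and `ε₀`, for every
`0 < ε ≤ (ε₀/2)·min(1, 1/max_i ‖y i‖)` and every `z` in the ball `B(x i, ε)`, the Moreau
envelope of `φ(z) = max_j (⟪z, y j⟫ - ψ j)` equals `⟪z, y i⟫ - ψ i - (ε/2)‖y i‖²`,
and consequently its gradient at `x i` is `y i`. -/
theorem moreau_envelope_interpolates
    {d n : ℕ} (hn : 1 < n) (x y : Fin n → EuclideanSpace ℝ (Fin d))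
    (hx : Function.Injective x) (hy : Function.Injective y)
    (ψ : Fin n → ℝ)
    (hψ : ∀ i j : Fin n, j ≠ i → ⟪x i, y j⟫ - ψ j < ⟪x i, y i⟫ - ψ i)
    (φ : EuclideanSpace ℝ (Fin d) → ℝ)
    (hφ : φ = fun z => ⨆ j : Fin n, (⟪z, y j⟫ - ψ j))
    (εt0 ε0 M : ℝ)
    (hM : M = ⨆ i : Fin n, ‖y i‖)
    (hεt0 : εt0 = ⨅ i : Fin n,
      ((⟪x i, y i⟫ - ψ i) - ⨆ j : {j : Fin n // j ≠ i}, (⟪x i, y (j : Fin n)⟫ - ψ (j : Fin n))))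
    (hε0 : ε0 = εt0 / 2 * min 1 (1 / M))
    (φε : ℝ → EuclideanSpace ℝ (Fin d) → ℝ)
    (hφε : φε = fun ε z => ⨅ w : EuclideanSpace ℝ (Fin d), (φ w + ‖w - z‖ ^ 2 / (2 * ε))) :
    ∀ ε : ℝ, 0 < ε → ε ≤ ε0 / 2 * min 1 (1 / M) →
      ∀ i : Fin n,
        (∀ z ∈ Metric.ball (x i) ε, φε ε z = ⟪z, y i⟫ - ψ i - ε / 2 * ‖y i‖ ^ 2) ∧
        HasGradientAt (φε ε) (y i) (x i) :=
  moreau_envelope_interpolates_general x y ψ φ hφ εt0 ε0 M hM hεt0 hε0 φε hφε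
end

section
/- Let φ: R^d → R be convex, finite, and differentiable everywhere (so ∇φ = F). Let x_n = λ_n u_n with λ_n → ∞, ‖u_n‖ = 1, u_n → u, and suppose that ‖∇φ(x)‖ ≤ 1 for all x and that for every w with 0 < ‖w‖ < 1 there exists a point z_w with ∇φ(z_w) = w. Then ∇φ(x_n) → u as n → ∞. -/
open scoped RealInnerProductSpace BigOperators
open Filter Set Topology

/-!
A gradient `g` of a convex function is monotone: `0 ≤ ⟪x - y, g x - g y⟫`. Testing this at
`x = λ • u` against a point `z` with `g z = w` gives `⟪u, g (λ • u)⟫ ≥ ⟪u, w⟫ - O(1/λ)` when `g`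
is bounded, so along the rays the radial component of `g` is eventually at least `⟪u, w⟫` for
every attained value `w`. Taking `w = t • u` for the limiting direction `u` and `t ↑ 1` forces
`⟪u, g (λ • u)⟫ → 1`, and for vectors in the closed unit ball this means `g (λ • u) - u → 0`.
-/

variable {E : Type*} [NormedAddCommGroup E] [InnerProductSpace ℝ E]

theorem ConvexOn.inner_gradient_le_sub [CompleteSpace E] {s : Set E} {φ : E → ℝ}
    (hφ : ConvexOn ℝ s φ) {x y g : E} (hx : x ∈ s) (hy : y ∈ s) (hg : HasGradientAt φ g x) :
    ⟪g, y - x⟫ ≤ φ y - φ x := by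
  have hline : HasDerivAt (φ ∘ (AffineMap.lineMap x y : ℝ →ᵃ[ℝ] E)) ⟪g, y - x⟫ 0 := by
    have hφ' : HasFDerivAt φ (InnerProductSpace.toDual ℝ E g : E →L[ℝ] ℝ)
        ((AffineMap.lineMap x y : ℝ →ᵃ[ℝ] E) 0) := by
      simpa using hg.hasFDerivAt
    simpa using hφ'.comp_hasDerivAt (0 : ℝ) AffineMap.hasDerivAt_lineMap
  simpa [slope_def_field] using (hφ.comp_affineMap (AffineMap.lineMap x y)).le_slope_of_hasDerivAt
    (by simpa using hx) (by simpa using hy) one_pos hline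

def IsMonotoneOperator (g : E → E) : Prop :=
  ∀ x y, 0 ≤ ⟪x - y, g x - g y⟫

theorem ConvexOn.isMonotoneOperator_of_hasGradientAt [CompleteSpace E] {φ : E → ℝ}
    (hφ : ConvexOn ℝ univ φ) {g : E → E} (hg : ∀ x, HasGradientAt φ (g x) x) :
    IsMonotoneOperator g := by
  intro x y
  have hxy := hφ.inner_gradient_le_sub (mem_univ x) (mem_univ y) (hg x)
  have hyx := hφ.inner_gradient_le_sub (mem_univ y) (mem_univ x) (hg y)
  have : ⟪x - y, g x - g y⟫ = -⟪g x, y - x⟫ - ⟪g y, x - y⟫ := by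
    simp only [inner_sub_left, inner_sub_right, real_inner_comm]
    ring
  linarith

namespace IsMonotoneOperator

variable {g : E → E} {M : ℝ}

theorem inner_sub_div_le_inner_apply_smul (hg : IsMonotoneOperator g) (hM : ∀ x, ‖g x‖ ≤ M)
    (z u : E) {t : ℝ} (ht : 0 < t) :
    ⟪u, g z⟫ - ‖z‖ * (M + ‖g z‖) / t ≤ ⟪u, g (t • u)⟫ := by
  have hmono := hg (t • u) z
  have hz : |⟪z, g (t • u) - g z⟫| ≤ ‖z‖ * (M + ‖g z‖) :=
    (abs_real_inner_le_norm _ _).trans <| mul_le_mul_of_nonneg_left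
      ((norm_sub_le _ _).trans (add_le_add_left (hM _) _)) (norm_nonneg _)
  have hexpand : ⟪t • u - z, g (t • u) - g z⟫ =
      t * (⟪u, g (t • u)⟫ - ⟪u, g z⟫) - ⟪z, g (t • u) - g z⟫ := by
    simp only [inner_sub_left, inner_sub_right, real_inner_smul_left]
    ring
  have : ⟪u, g z⟫ - ⟪u, g (t • u)⟫ ≤ ‖z‖ * (M + ‖g z‖) / t := by
    rw [le_div_iff₀ ht]
    rw [hexpand] at hmono
    linarith [neg_abs_le ⟪z, g (t • u) - g z⟫]
  linarith

theorem eventually_lt_inner_apply_smul {ι : Type*} {l : Filter ι} (hg : IsMonotoneOperator g)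
    (hM : ∀ x, ‖g x‖ ≤ M) (z : E) {t : ι → ℝ} {u : ι → E} {v : E}
    (ht : Tendsto t l atTop) (hu : Tendsto u l (𝓝 v)) {c : ℝ} (hc : c < ⟪v, g z⟫) :
    ∀ᶠ n in l, c < ⟪u n, g (t n • u n)⟫ := by
  have hlim : Tendsto (fun n => ⟪u n, g z⟫ - ‖z‖ * (M + ‖g z‖) / t n) l (𝓝 ⟪v, g z⟫) := by
    simpa using (hu.inner tendsto_const_nhds).sub (tendsto_const_nhds.div_atTop ht)
  filter_upwards [hlim.eventually (lt_mem_nhds hc), ht.eventually_gt_atTop 0] with n hn htn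
  exact hn.trans_le (hg.inner_sub_div_le_inner_apply_smul hM z (u n) htn)

end IsMonotoneOperator

theorem tendsto_inner_nhds_one_of_eventually_lt {ι : Type*} {l : Filter ι} {a b : ι → E}
    (ha : ∀ n, ‖a n‖ ≤ 1) (hb : ∀ n, ‖b n‖ ≤ 1) (h : ∀ c < 1, ∀ᶠ n in l, c < ⟪a n, b n⟫) :
    Tendsto (fun n => ⟪a n, b n⟫) l (𝓝 1) := by
  refine tendsto_order.2 ⟨h, fun c hc => Eventually.of_forall fun n => ?_⟩
  calc ⟪a n, b n⟫ ≤ ‖a n‖ * ‖b n‖ := real_inner_le_norm _ _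
    _ ≤ 1 := mul_le_one₀ (ha n) (norm_nonneg _) (hb n)
    _ < c := hc

theorem tendsto_sub_nhds_zero_of_inner_tendsto_one {ι : Type*} {l : Filter ι} {a b : ι → E}
    (ha : ∀ n, ‖a n‖ ≤ 1) (hb : ∀ n, ‖b n‖ ≤ 1) (h : Tendsto (fun n => ⟪a n, b n⟫) l (𝓝 1)) :
    Tendsto (fun n => a n - b n) l (𝓝 0) := by
  have hsq : ∀ n, ‖a n - b n‖ ^ 2 ≤ 2 - 2 * ⟪a n, b n⟫ := fun n => by
    rw [norm_sub_sq_real]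
    nlinarith [ha n, hb n, norm_nonneg (a n), norm_nonneg (b n)]
  have hlim : Tendsto (fun n => 2 - 2 * ⟪a n, b n⟫) l (𝓝 0) := by
    simpa using (h.const_mul 2).const_sub 2
  have := (squeeze_zero (fun n => by positivity) hsq hlim).sqrt
  simpa [Real.sqrt_sq (norm_nonneg _), ← tendsto_zero_iff_norm_tendsto_zero] using this

/-- if `φ` is convex, everywhere differentiable with gradient `g` satisfying
`‖g z‖ ≤ 1` and whose range covers the punctured open unit ball, and if `x n = λ n • u n`
with `λ n → ∞`, `‖u n‖ = 1` and `u n → u`, then `g (x n) → u`. -/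
theorem gradient_tendsto_radial_direction
    {d : ℕ} (φ : EuclideanSpace ℝ (Fin d) → ℝ)
    (hφ : ConvexOn ℝ Set.univ φ)
    (g : EuclideanSpace ℝ (Fin d) → EuclideanSpace ℝ (Fin d))
    (hg : ∀ z, HasGradientAt φ (g z) z)
    (hg1 : ∀ z, ‖g z‖ ≤ 1)
    (hsurj : ∀ w : EuclideanSpace ℝ (Fin d), 0 < ‖w‖ → ‖w‖ < 1 → ∃ z, g z = w)
    (lam : ℕ → ℝ) (u : ℕ → EuclideanSpace ℝ (Fin d)) (ulim : EuclideanSpace ℝ (Fin d))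
    (hlam : Tendsto lam atTop atTop)
    (hu : ∀ n, ‖u n‖ = 1) (huconv : Tendsto u atTop (nhds ulim)) :
    Tendsto (fun n => g (lam n • u n)) atTop (nhds ulim) := by
  have hulim : ‖ulim‖ = 1 := tendsto_nhds_unique huconv.norm (by simp [hu])
  have hmono := hφ.isMonotoneOperator_of_hasGradientAt hg
  have hlower : ∀ c < 1, ∀ᶠ n in atTop, c < ⟪g (lam n • u n), u n⟫ := by
    intro c hc
    obtain ⟨t, hct, ht1⟩ := exists_between (max_lt hc one_pos)
    have ht0 : 0 < t := (le_max_right c 0).trans_lt hct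
    have hnorm : ‖t • ulim‖ = t := by rw [norm_smul, hulim, Real.norm_of_nonneg ht0.le, mul_one]
    obtain ⟨z, hz⟩ := hsurj (t • ulim) (by rwa [hnorm]) (by rwa [hnorm])
    have hcz : c < ⟪ulim, g z⟫ := by
      rw [hz, real_inner_smul_right, real_inner_self_eq_norm_sq, hulim, one_pow, mul_one]
      exact (le_max_left c 0).trans_lt hct
    filter_upwards [hmono.eventually_lt_inner_apply_smul hg1 z hlam huconv hcz] with n hn
    rwa [real_inner_comm]
  have hdiff := tendsto_sub_nhds_zero_of_inner_tendsto_one (fun n => hg1 _) (fun n => (hu n).le)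
    (tendsto_inner_nhds_one_of_eventually_lt (fun n => hg1 _) (fun n => (hu n).le) hlower)
  simpa using hdiff.add huconv
end

section
/- Let f_{i,j}(ψ) := ψ_i - ψ_j - c_{i,j} for i ≠ j in {1,...,n}, where c_{i,j} := ⟨x_i, y_i - y_j⟩. Exactly one of the following holds: (a) there exists ψ ∈ R^n with f_{i,j}(ψ) < 0 for all i ≠ j; or (b) there exists a cycle i_0, i_1, ..., i_m, i_0 of distinct indices with c_{i_0,i_1} + c_{i_1,i_2} + ... + c_{i_m,i_0} ≤ 0. Consequently, strict cyclical monotonicity (every nontrivial cycle sum Σ ⟨x_{i_k}, y_{i_k} - y_{i_{k+1}}⟩ > 0) is equivalent to the existence of weights ψ_1,...,ψ_n with ⟨x_i, y_i - y_j⟩ > ψ_i - ψ_j for all i ≠ j. -/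
open scoped RealInnerProductSpace BigOperators

/-!
Along a cycle the differences `ψ a - ψ b` telescope to `0`, so a strict potential makes every
cycle positive. Conversely, if every simple cycle has nonnegative cost, the cost of a cheapest
simple path starting at `a` is a potential with `ψ a - ψ b ≤ c a b`: prepend the edge `a → b` to
a cheapest path from `b`, or, if that path already passes through `a`, cut it there and use
the cycle closed by `a → b`. Since there are finitely many simple cycles, positive cycle costs
are at least some `δ > 0`; a simple cycle has at most `N = #α` edges, so the costs
`c - δ / (N + 1)` still have nonnegative cycles, and their potential is strict for `c`.
-/

namespace CyclicPotential

variable {α : Type*} (c : α → α → ℝ)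

def pathCost : List α → ℝ
  | a :: b :: l => c a b + pathCost (b :: l)
  | _ => 0

@[simp] lemma pathCost_singleton (a : α) : pathCost c [a] = 0 := rfl

@[simp] lemma pathCost_cons_cons (a b : α) (l : List α) :
    pathCost c (a :: b :: l) = c a b + pathCost c (b :: l) := rfl

lemma pathCost_append_cons (a : α) (l₂ : List α) :
    ∀ l₁ : List α, pathCost c (l₁ ++ a :: l₂) = pathCost c (l₁ ++ [a]) + pathCost c (a :: l₂)
  | [] => by simp
  | [b] => by simp
  | b :: b' :: l₁ => by
      simp only [List.cons_append, pathCost_cons_cons, add_assoc]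
      rw [← List.cons_append, pathCost_append_cons a l₂ (b' :: l₁), List.cons_append]

lemma pathCost_sub_const (ε : ℝ) :
    ∀ (a : α) (l : List α),
      pathCost (fun x y => c x y - ε) (a :: l) = pathCost c (a :: l) - l.length * ε
  | _, [] => by simp
  | a, b :: l => by
      simp only [pathCost_cons_cons, pathCost_sub_const ε b l, List.length_cons]
      push_cast
      ring

lemma pathCost_ofFn : ∀ {m : ℕ} (f : Fin (m + 1) → α),
    pathCost c (List.ofFn f) = ∑ k : Fin m, c (f k.castSucc) (f k.succ)
  | 0, f => by simp
  | m + 1, f => by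
      rw [List.ofFn_succ, List.ofFn_succ, pathCost_cons_cons,
        ← List.ofFn_succ (f := fun k => f k.succ), pathCost_ofFn (fun k => f k.succ),
        Fin.sum_univ_succ]
      rfl

lemma sum_cycle_eq_pathCost {m : ℕ} (i : Fin (m + 1) → α) :
    ∑ k, c (i k) (i (k + 1)) = pathCost c (List.ofFn i ++ [i 0]) := by
  rw [List.ofFn_succ', List.concat_eq_append, List.append_assoc, List.singleton_append,
    pathCost_append_cons, ← List.concat_eq_append, ← List.ofFn_succ', pathCost_ofFn,
    Fin.sum_univ_castSucc, Fin.last_add_one]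
  simp [Fin.coeSucc_eq_succ]

lemma sum_cycle_pos_of_potential {ψ : α → ℝ} (hψ : ∀ a b, a ≠ b → ψ a - ψ b < c a b)
    {m : ℕ} (hm : 1 ≤ m) {i : Fin (m + 1) → α} (hi : Function.Injective i) :
    0 < ∑ k, c (i k) (i (k + 1)) := by
  have htelescope : ∑ k, (ψ (i k) - ψ (i (k + 1))) = 0 := by
    rw [Finset.sum_sub_distrib, sub_eq_zero]
    exact (Fintype.sum_equiv (Equiv.addRight 1) _ _ fun _ => rfl).symm
  have hstep : ∀ k : Fin (m + 1), i k ≠ i (k + 1) := fun k h => by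
    have : (1 : Fin (m + 1)) = 0 := add_eq_left.mp (hi h).symm
    rw [Fin.one_eq_zero_iff] at this
    omega
  calc (0 : ℝ) = ∑ k, (ψ (i k) - ψ (i (k + 1))) := htelescope.symm
    _ < ∑ k, c (i k) (i (k + 1)) :=
      Finset.sum_lt_sum_of_nonempty Finset.univ_nonempty fun k _ => hψ _ _ (hstep k)

variable [Fintype α]

lemma finite_setOf_nodup : {l : List α | l.Nodup}.Finite :=
  (List.finite_length_le α (Fintype.card α)).subset fun _ hl => List.Nodup.length_le_card hl

lemma exists_min_pathCost (a : α) :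
    ∃ l, (a :: l).Nodup ∧ ∀ l', (a :: l').Nodup → pathCost c (a :: l) ≤ pathCost c (a :: l') :=
  Set.exists_min_image {l | (a :: l).Nodup} (fun l => pathCost c (a :: l))
    (finite_setOf_nodup.preimage (List.cons_injective.injOn)) ⟨[], List.nodup_singleton a⟩

theorem exists_potential_of_cycle_nonneg
    (hcyc : ∀ a l, (a :: l).Nodup → l ≠ [] → 0 ≤ pathCost c (a :: l ++ [a])) :
    ∃ ψ : α → ℝ, ∀ a b, a ≠ b → ψ a - ψ b ≤ c a b := by
  choose p hp hmin using exists_min_pathCost c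
  refine ⟨fun a => pathCost c (a :: p a), fun a b hab => ?_⟩
  by_cases ha : a ∈ p b
  · obtain ⟨l₁, l₂, hl⟩ := List.append_of_mem ha
    have hnodup : (b :: l₁ ++ a :: l₂).Nodup := by simpa only [hl, List.cons_append] using hp b
    have hsplit : pathCost c (b :: p b) = pathCost c (b :: l₁ ++ [a]) + pathCost c (a :: l₂) := by
      rw [hl, ← List.cons_append, pathCost_append_cons]
    have hcycle : 0 ≤ pathCost c (b :: l₁ ++ [a]) + c a b := by
      have := hcyc b (l₁ ++ [a]) (hnodup.sublist (by simp)) (by simp)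
      rwa [List.cons_append, List.append_assoc, List.singleton_append, ← List.cons_append,
        pathCost_append_cons, pathCost_cons_cons, pathCost_singleton, add_zero] at this
    have hshort := hmin a l₂ (hnodup.sublist (List.sublist_append_right _ _))
    linarith
  · have hshort := hmin a (b :: p b) (List.nodup_cons.mpr ⟨by simp [hab, ha], hp b⟩)
    rw [pathCost_cons_cons] at hshort
    linarith

lemma exists_pos_le_cycle_cost
    (hcyc : ∀ a l, (a :: l).Nodup → l ≠ [] → 0 < pathCost c (a :: l ++ [a])) :
    ∃ δ > 0, ∀ a l, (a :: l).Nodup → l ≠ [] → δ ≤ pathCost c (a :: l ++ [a]) := by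
  set cycles := {p : α × List α | (p.1 :: p.2).Nodup ∧ p.2 ≠ []}
  have hfinite : cycles.Finite := (Set.finite_univ.prod finite_setOf_nodup).subset
    fun p hp => ⟨trivial, (List.nodup_cons.mp hp.1).2⟩
  rcases cycles.eq_empty_or_nonempty with hempty | hnonempty
  · exact ⟨1, one_pos, fun a l hn hl =>
      (Set.eq_empty_iff_forall_notMem.mp hempty (a, l) ⟨hn, hl⟩).elim⟩
  · obtain ⟨⟨a₀, l₀⟩, ⟨hn₀, hl₀⟩, hmin⟩ := Set.exists_min_image cycles
      (fun p => pathCost c (p.1 :: p.2 ++ [p.1])) hfinite hnonempty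
    exact ⟨_, hcyc a₀ l₀ hn₀ hl₀, fun a l hn hl => hmin (a, l) ⟨hn, hl⟩⟩

theorem exists_strict_potential_of_cycle_pos
    (hcyc : ∀ a l, (a :: l).Nodup → l ≠ [] → 0 < pathCost c (a :: l ++ [a])) :
    ∃ ψ : α → ℝ, ∀ a b, a ≠ b → ψ a - ψ b < c a b := by
  obtain ⟨δ, hδ, hδle⟩ := exists_pos_le_cycle_cost c hcyc
  set N : ℝ := (Fintype.card α : ℝ)
  set ε := δ / (N + 1)
  have hε : 0 < ε := by positivity
  obtain ⟨ψ, hψ⟩ := exists_potential_of_cycle_nonneg (fun x y => c x y - ε) fun a l hn hl => by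
    have hlen : (l.length + 1 : ℝ) ≤ N := by
      simpa [N] using (Nat.cast_le (α := ℝ)).mpr hn.length_le_card
    have hNε : N * ε ≤ δ := by
      rw [mul_div_assoc', div_le_iff₀ (by positivity)]
      linarith
    have hedges := (mul_le_mul_of_nonneg_right hlen hε.le).trans hNε
    rw [List.cons_append, pathCost_sub_const, ← List.cons_append, List.length_append,
      List.length_singleton, Nat.cast_add, Nat.cast_one]
    linarith [hδle a l hn hl]
  exact ⟨ψ, fun a b hab => by linarith [hψ a b hab]⟩

theorem exists_potential_iff_sum_cycle_pos :
    (∃ ψ : α → ℝ, ∀ a b, a ≠ b → ψ a - ψ b < c a b) ↔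
      ∀ (m : ℕ) (i : Fin (m + 1) → α), 1 ≤ m → Function.Injective i →
        0 < ∑ k, c (i k) (i (k + 1)) := by
  refine ⟨fun ⟨ψ, hψ⟩ m i hm hi => sum_cycle_pos_of_potential c hψ hm hi,
    fun hpos => exists_strict_potential_of_cycle_pos c fun a l hn hl => ?_⟩
  have hcycle := hpos l.length (a :: l).get (List.length_pos_iff.mpr hl)
    (List.nodup_iff_injective_get.mp hn)
  rwa [sum_cycle_eq_pathCost, List.ofFn_get] at hcycle

end CyclicPotential

open CyclicPotential in
theorem farkas_cycle_alternative_general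
    {n : ℕ}
    (c : Fin n → Fin n → ℝ) :
    Xor'
      (∃ ψ : Fin n → ℝ, ∀ i j : Fin n, i ≠ j → ψ i - ψ j - c i j < 0)
      (∃ (m : ℕ) (i : Fin (m + 1) → Fin n), 1 ≤ m ∧ Function.Injective i ∧
        ∑ k : Fin (m + 1), c (i k) (i (k + 1)) ≤ 0) ∧
    ((∀ (m : ℕ) (i : Fin (m + 1) → Fin n), 1 ≤ m → Function.Injective i →
        0 < ∑ k : Fin (m + 1), c (i k) (i (k + 1)))
      ↔ ∃ ψ : Fin n → ℝ, ∀ i j : Fin n, i ≠ j → ψ i - ψ j < c i j) := by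
  have hpotential := (exists_potential_iff_sum_cycle_pos c).symm
  refine ⟨?_, hpotential⟩
  simp only [sub_neg, ← hpotential]
  exact xor_iff_iff_not.mpr (by simp only [not_exists, not_and, not_le])

/-- Farkas/cycle alternative for the costs `c i j = ⟪x i, y i - y j⟫`:
exactly one of (a) there exists `ψ` with `ψ i - ψ j - c i j < 0` for all `i ≠ j`, and
(b) there is a nontrivial cycle of distinct indices with nonpositive total cost, holds.
Consequently, strict cyclical monotonicity (every nontrivial cycle has positive cost) is
equivalent to the existence of weights `ψ` with `⟪x i, y i - y j⟫ > ψ i - ψ j` for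
all `i ≠ j`. -/
theorem farkas_cycle_alternative
    {d n : ℕ} (x y : Fin n → EuclideanSpace ℝ (Fin d))
    (c : Fin n → Fin n → ℝ) (hc : ∀ i j, c i j = ⟪x i, y i - y j⟫) :
    Xor'
      (∃ ψ : Fin n → ℝ, ∀ i j : Fin n, i ≠ j → ψ i - ψ j - c i j < 0)
      (∃ (m : ℕ) (i : Fin (m + 1) → Fin n), 1 ≤ m ∧ Function.Injective i ∧
        ∑ k : Fin (m + 1), c (i k) (i (k + 1)) ≤ 0) ∧
    ((∀ (m : ℕ) (i : Fin (m + 1) → Fin n), 1 ≤ m → Function.Injective i →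
        0 < ∑ k : Fin (m + 1), c (i k) (i (k + 1)))
      ↔ ∃ ψ : Fin n → ℝ, ∀ i j : Fin n, i ≠ j → ψ i - ψ j < c i j) :=
  farkas_cycle_alternative_general c
end
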